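/- For 0 < α < 4/27, the function g_α(z) = (α/f_α(z))·e^{αΓ_α(z)}·∫_z^{a_α} e^{−αΓ_α(z')}dz' satisfies g_α(z) ≥ 3αz^{2/3} for all 0 < z < a_α, and consequently g_α is monotonically increasing on (0, a_α) with lim_{z→a_α} g_α(z) = 3α·a_α^{2/3} < 1. -/

import Mathlib

/-!
Write `E = exp (-α Γ)` and `k z = (1/3) z^(-2/3)`, so that `f' = α - k`. Since `Γ' = 1 / f`,
`(f E)' = (f' - α) E = -k E`, and `f E` vanishes at `a` (where `f → 0` and `0 < E ≤ 1`);
hence `f(z) E(z) = ∫_z^a k E` and `g(z) = α ∫_z^a E / ∫_z^a k E` is `α` divided by the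
`E`-weighted mean of the decreasing function `k` over `[z, a]`. That mean lies between `k a`
and `k z` and decreases in `z`, which gives the lower bound `α / k z = 3 α z^(2/3)`,
monotonicity, and, by squeezing, the limit `α / k a = 3 α a^(2/3)`.

For the last inequality put `s = a^(1/3)`: `f a = 0` says `α s³ = s - 1`, and
`f (27/8) = 27 α / 8 - 1/2 < 0` forces `a < 27/8`, i.e. `s < 3/2`;
so `3 α s² = 3 (s - 1) / s < 1`.
-/

open Set Filter Topology MeasureTheory intervalIntegral

section WeightedAverage

variable {k w : ℝ → ℝ} {x y b : ℝ}

theorem integral_mul_le_mul_integral_of_antitoneOn (hxb : x ≤ b) (hk : AntitoneOn k (Icc x b))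
    (hw : ∀ t ∈ Icc x b, 0 ≤ w t) (hwi : IntervalIntegrable w volume x b)
    (hkwi : IntervalIntegrable (fun t => k t * w t) volume x b) :
    ∫ t in x..b, k t * w t ≤ k x * ∫ t in x..b, w t := by
  rw [← intervalIntegral.integral_const_mul]
  refine integral_mono_on hxb hkwi (hwi.const_mul _) fun t ht => ?_
  exact mul_le_mul_of_nonneg_right (hk ⟨le_rfl, hxb⟩ ht ht.1) (hw t ht)

theorem mul_integral_le_integral_mul_of_antitoneOn (hxb : x ≤ b) (hk : AntitoneOn k (Icc x b))
    (hw : ∀ t ∈ Icc x b, 0 ≤ w t) (hwi : IntervalIntegrable w volume x b)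
    (hkwi : IntervalIntegrable (fun t => k t * w t) volume x b) :
    k b * ∫ t in x..b, w t ≤ ∫ t in x..b, k t * w t := by
  rw [← intervalIntegral.integral_const_mul]
  refine integral_mono_on hxb (hwi.const_mul _) hkwi fun t ht => ?_
  exact mul_le_mul_of_nonneg_right (hk ht ⟨hxb, le_rfl⟩ ht.2) (hw t ht)

theorem integral_mul_integral_mul_le_of_antitoneOn (hxy : x ≤ y) (hyb : y ≤ b)
    (hk : AntitoneOn k (Icc x b)) (hw : ∀ t ∈ Icc x b, 0 ≤ w t)
    (hwi : IntervalIntegrable w volume x b)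
    (hkwi : IntervalIntegrable (fun t => k t * w t) volume x b) :
    (∫ t in x..b, w t) * ∫ t in y..b, k t * w t ≤
      (∫ t in y..b, w t) * ∫ t in x..b, k t * w t := by
  have hy : y ∈ uIcc x b := mem_uIcc_of_le hxy hyb
  have hxy_sub : uIcc x y ⊆ uIcc x b := uIcc_subset_uIcc left_mem_uIcc hy
  have hyb_sub : uIcc y b ⊆ uIcc x b := uIcc_subset_uIcc hy right_mem_uIcc
  have hw_xy : ∀ t ∈ Icc x y, 0 ≤ w t := fun t ht => hw t ⟨ht.1, ht.2.trans hyb⟩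
  rw [← integral_add_adjacent_intervals (hwi.mono_set hxy_sub) (hwi.mono_set hyb_sub),
    ← integral_add_adjacent_intervals (hkwi.mono_set hxy_sub) (hkwi.mono_set hyb_sub)]
  have h_tail := integral_mul_le_mul_integral_of_antitoneOn hyb
    (hk.mono (Icc_subset_Icc_left hxy)) (fun t ht => hw t ⟨hxy.trans ht.1, ht.2⟩)
    (hwi.mono_set hyb_sub) (hkwi.mono_set hyb_sub)
  have h_head := mul_integral_le_integral_mul_of_antitoneOn hxy
    (hk.mono (Icc_subset_Icc_right hyb)) hw_xy (hwi.mono_set hxy_sub) (hkwi.mono_set hxy_sub)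
  have h_head_nonneg : 0 ≤ ∫ t in x..y, w t := integral_nonneg hxy hw_xy
  have h_tail_nonneg : 0 ≤ ∫ t in y..b, w t :=
    integral_nonneg hyb fun t ht => hw t ⟨hxy.trans ht.1, ht.2⟩
  nlinarith [mul_le_mul_of_nonneg_left h_tail h_head_nonneg,
    mul_le_mul_of_nonneg_left h_head h_tail_nonneg]

end WeightedAverage

/-- The reciprocal of the `w`-weighted mean of `k` over `[x, b]`. -/
noncomputable def tailRatio (k w : ℝ → ℝ) (b x : ℝ) : ℝ :=
  (∫ t in x..b, w t) / ∫ t in x..b, k t * w t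

section TailRatio

variable {k w : ℝ → ℝ} {c b x : ℝ}

theorem integral_mul_pos_of_antitoneOn (hk : AntitoneOn k (Ioc c b)) (hkb : 0 < k b)
    (hw : ∀ t ∈ Ioc c b, 0 < w t) (hx : x ∈ Ioo c b)
    (hkwi : IntervalIntegrable (fun t => k t * w t) volume x b) :
    0 < ∫ t in x..b, k t * w t := by
  refine intervalIntegral_pos_of_pos_on hkwi (fun t ht => ?_) hx.2
  have ht' : t ∈ Ioc c b := ⟨hx.1.trans ht.1, ht.2.le⟩
  exact mul_pos (hkb.trans_le (hk ht' ⟨hx.1.trans hx.2, le_rfl⟩ ht.2.le)) (hw t ht')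

theorem inv_le_tailRatio (hk : AntitoneOn k (Ioc c b)) (hkb : 0 < k b)
    (hw : ∀ t ∈ Ioc c b, 0 < w t) (hx : x ∈ Ioo c b) (hwi : IntervalIntegrable w volume x b)
    (hkwi : IntervalIntegrable (fun t => k t * w t) volume x b) :
    (k x)⁻¹ ≤ tailRatio k w b x := by
  have hsub : Icc x b ⊆ Ioc c b := fun t ht => ⟨hx.1.trans_le ht.1, ht.2⟩
  have hkx : 0 < k x :=
    hkb.trans_le (hk (hsub ⟨le_rfl, hx.2.le⟩) ⟨hx.1.trans hx.2, le_rfl⟩ hx.2.le)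
  rw [tailRatio, le_div_iff₀ (integral_mul_pos_of_antitoneOn hk hkb hw hx hkwi),
    inv_mul_le_iff₀ hkx]
  exact integral_mul_le_mul_integral_of_antitoneOn hx.2.le (hk.mono hsub)
    (fun t ht => (hw t (hsub ht)).le) hwi hkwi

theorem tailRatio_le_inv (hk : AntitoneOn k (Ioc c b)) (hkb : 0 < k b)
    (hw : ∀ t ∈ Ioc c b, 0 < w t) (hx : x ∈ Ioo c b) (hwi : IntervalIntegrable w volume x b)
    (hkwi : IntervalIntegrable (fun t => k t * w t) volume x b) :
    tailRatio k w b x ≤ (k b)⁻¹ := by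
  have hsub : Icc x b ⊆ Ioc c b := fun t ht => ⟨hx.1.trans_le ht.1, ht.2⟩
  rw [tailRatio, div_le_iff₀ (integral_mul_pos_of_antitoneOn hk hkb hw hx hkwi),
    le_inv_mul_iff₀ hkb]
  exact mul_integral_le_integral_mul_of_antitoneOn hx.2.le (hk.mono hsub)
    (fun t ht => (hw t (hsub ht)).le) hwi hkwi

theorem monotoneOn_tailRatio (hk : AntitoneOn k (Ioc c b)) (hkb : 0 < k b)
    (hw : ∀ t ∈ Ioc c b, 0 < w t) (hi : ∀ x ∈ Ioo c b,
      IntervalIntegrable w volume x b ∧ IntervalIntegrable (fun t => k t * w t) volume x b) :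
    MonotoneOn (tailRatio k w b) (Ioo c b) := by
  intro x hx y hy hxy
  have hsub : Icc x b ⊆ Ioc c b := fun t ht => ⟨hx.1.trans_le ht.1, ht.2⟩
  rw [tailRatio, tailRatio,
    div_le_div_iff₀ (integral_mul_pos_of_antitoneOn hk hkb hw hx (hi x hx).2)
      (integral_mul_pos_of_antitoneOn hk hkb hw hy (hi y hy).2)]
  exact integral_mul_integral_mul_le_of_antitoneOn hxy hy.2.le (hk.mono hsub)
    (fun t ht => (hw t (hsub ht)).le) (hi x hx).1 (hi x hx).2

theorem tendsto_tailRatio (hcb : c < b) (hk : AntitoneOn k (Ioc c b)) (hkb : 0 < k b)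
    (hkc : ContinuousWithinAt k (Iio b) b) (hw : ∀ t ∈ Ioc c b, 0 < w t) (hi : ∀ x ∈ Ioo c b,
      IntervalIntegrable w volume x b ∧ IntervalIntegrable (fun t => k t * w t) volume x b) :
    Tendsto (tailRatio k w b) (𝓝[<] b) (𝓝 (k b)⁻¹) := by
  refine tendsto_of_tendsto_of_tendsto_of_le_of_le' (hkc.inv₀ hkb.ne') tendsto_const_nhds ?_ ?_
  all_goals filter_upwards [Ioo_mem_nhdsLT hcb] with x hx
  · exact inv_le_tailRatio hk hkb hw hx (hi x hx).1 (hi x hx).2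
  · exact tailRatio_le_inv hk hkb hw hx (hi x hx).1 (hi x hx).2

end TailRatio

theorem pos_of_mem_Ico_of_ne_zero {f : ℝ → ℝ} {c a : ℝ} (hf : ContinuousOn f (Icc c a))
    (hc : 0 < f c) (hne : ∀ z ∈ Ioo c a, f z ≠ 0) : ∀ z ∈ Ico c a, 0 < f z := by
  rintro z ⟨hcz, hza⟩
  rcases hcz.eq_or_lt with rfl | hcz
  · exact hc
  by_contra! hz
  obtain ⟨y, hy, hfy⟩ := intermediate_value_Ioo' hcz.le (hf.mono (Icc_subset_Icc_right hza.le))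
    ⟨hz.lt_of_ne (hne z ⟨hcz, hza⟩), hc⟩
  exact hne y ⟨hy.1, hy.2.trans hza⟩ hfy

theorem hasDerivAt_integral_one_div {f : ℝ → ℝ} {c t : ℝ} (hfc : Continuous f)
    (hf : ∀ s ∈ uIcc c t, f s ≠ 0) :
    HasDerivAt (fun z => ∫ s in c..z, 1 / f s) (1 / f t) t :=
  integral_hasDerivAt_right (continuousOn_const.div hfc.continuousOn hf).intervalIntegrable
    (measurable_const.div hfc.measurable).stronglyMeasurable.stronglyMeasurableAtFilter
    (continuousAt_const.div hfc.continuousAt (hf t right_mem_uIcc))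

theorem hasDerivAt_mul_exp_neg_mul {f Γ : ℝ → ℝ} {α c t : ℝ} (hf : HasDerivAt f (α - c) t)
    (hΓ : HasDerivAt Γ (1 / f t) t) (ht : f t ≠ 0) :
    HasDerivAt (fun s => f s * Real.exp (-(α * Γ s))) (-(c * Real.exp (-(α * Γ t)))) t := by
  have hE : HasDerivAt (fun s => Real.exp (-(α * Γ s)))
      (Real.exp (-(α * Γ t)) * -(α * (1 / f t))) t := (hΓ.const_mul α).neg.exp
  refine (hf.mul hE).congr_deriv ?_
  field_simp
  ring

theorem integral_eq_of_hasDerivAt_neg_of_nonneg {φ ψ : ℝ → ℝ} {x b : ℝ} (hxb : x ≤ b)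
    (hφ : ContinuousOn φ (Icc x b)) (hφb : φ b = 0)
    (hderiv : ∀ t ∈ Ioo x b, HasDerivAt φ (-ψ t) t) (hψ : ∀ t ∈ Ioo x b, 0 ≤ ψ t) :
    IntervalIntegrable ψ volume x b ∧ ∫ t in x..b, ψ t = φ x := by
  have hderiv' : ∀ t ∈ Ioo x b, HasDerivAt (-φ) (ψ t) t := fun t ht => by
    simpa using (hderiv t ht).neg
  have hψi : IntervalIntegrable ψ volume x b := by
    rw [intervalIntegrable_iff_integrableOn_Ioc_of_le hxb]
    exact integrableOn_deriv_of_nonneg hφ.neg hderiv' hψ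
  refine ⟨hψi, ?_⟩
  simpa [hφb] using integral_eq_sub_of_hasDerivAt_of_le hxb hφ.neg hderiv' hψi

section ExpWeight

variable {f k Γ : ℝ → ℝ} {α c a z : ℝ}

theorem intervalIntegrable_exp_neg_mul (hα : 0 ≤ α) (hza : z ≤ a)
    (hΓc : ContinuousOn Γ (Ioo z a)) (hΓ0 : ∀ t ∈ Ioo z a, 0 ≤ Γ t) :
    IntervalIntegrable (fun t => Real.exp (-(α * Γ t))) volume z a := by
  rw [intervalIntegrable_iff_integrableOn_Ioo_of_le hza]
  refine .of_bound measure_Ioo_lt_top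
    ((continuousOn_const.mul hΓc).neg.rexp.aestronglyMeasurable measurableSet_Ioo) 1 ?_
  filter_upwards [ae_restrict_mem measurableSet_Ioo] with t ht
  rw [Real.norm_of_nonneg (Real.exp_pos _).le, Real.exp_le_one_iff, neg_nonpos]
  exact mul_nonneg hα (hΓ0 t ht)

theorem integral_mul_exp_neg_mul_eq (hα : 0 ≤ α) (hfc : ContinuousAt f a) (hfa : f a = 0)
    (hfne : ∀ t ∈ Ioo c a, f t ≠ 0) (hf' : ∀ t ∈ Ioo c a, HasDerivAt f (α - k t) t)
    (hk : ∀ t ∈ Ioo c a, 0 ≤ k t) (hΓ0 : ∀ t ∈ Ioo c a, 0 ≤ Γ t)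
    (hΓ' : ∀ t ∈ Ioo c a, HasDerivAt Γ (1 / f t) t) (hz : z ∈ Ioo c a) :
    IntervalIntegrable (fun t => k t * Real.exp (-(α * Γ t))) volume z a ∧
      ∫ t in z..a, k t * Real.exp (-(α * Γ t)) = f z * Real.exp (-(α * Γ z)) := by
  have hsub : Ico z a ⊆ Ioo c a := fun t ht => ⟨hz.1.trans_le ht.1, ht.2⟩
  have hderiv : ∀ t ∈ Ioo c a, HasDerivAt (fun s => f s * Real.exp (-(α * Γ s)))
      (-(k t * Real.exp (-(α * Γ t)))) t := fun t ht =>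
    hasDerivAt_mul_exp_neg_mul (hf' t ht) (hΓ' t ht) (hfne t ht)
  refine integral_eq_of_hasDerivAt_neg_of_nonneg hz.2.le ?_ (by simp [hfa])
    (fun t ht => hderiv t (hsub (Ioo_subset_Ico_self ht)))
    (fun t ht => mul_nonneg (hk t (hsub (Ioo_subset_Ico_self ht))) (Real.exp_pos _).le)
  intro t ht
  rcases ht.2.lt_or_eq with hta | rfl
  · exact (hderiv t (hsub ⟨ht.1, hta⟩)).continuousAt.continuousWithinAt
  rw [← Ico_insert_right hz.2.le, continuousWithinAt_insert_self, ContinuousWithinAt, hfa,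
    zero_mul]
  refine (hfa ▸ hfc.tendsto.mono_left nhdsWithin_le_nhds).zero_mul_isBoundedUnder_le
    (isBoundedUnder_of_eventually_le (a := 1) (eventually_nhdsWithin_of_forall fun s hs => ?_))
  rw [Function.comp_apply, Real.norm_of_nonneg (Real.exp_pos _).le, Real.exp_le_one_iff,
    neg_nonpos]
  exact mul_nonneg hα (hΓ0 s (hsub hs))

theorem integrable_and_eqOn_mul_tailRatio {g : ℝ → ℝ} (hα : 0 ≤ α)
    (hfc : Continuous f) (hfpos : ∀ t ∈ Ico 0 a, 0 < f t) (hfa : f a = 0)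
    (hf' : ∀ t ∈ Ioo 0 a, HasDerivAt f (α - k t) t) (hk : ∀ t ∈ Ioo 0 a, 0 ≤ k t)
    (hΓ : Γ = fun z => ∫ t in (0:ℝ)..z, 1 / f t)
    (hg : g = fun z => α / f z * Real.exp (α * Γ z) * ∫ t in z..a, Real.exp (-(α * Γ t))) :
    (∀ z ∈ Ioo 0 a, IntervalIntegrable (fun t => Real.exp (-(α * Γ t))) volume z a ∧
      IntervalIntegrable (fun t => k t * Real.exp (-(α * Γ t))) volume z a) ∧
    EqOn g (fun z => α * tailRatio k (fun t => Real.exp (-(α * Γ t))) a z) (Ioo 0 a) := by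
  have hΓ' : ∀ t ∈ Ioo 0 a, HasDerivAt Γ (1 / f t) t := fun t ht => hΓ ▸
    hasDerivAt_integral_one_div hfc fun s hs =>
      (hfpos s (Icc_subset_Ico_right ht.2 (uIcc_of_le ht.1.le ▸ hs))).ne'
  have hΓ0 : ∀ t ∈ Ioo 0 a, 0 ≤ Γ t := fun t ht => hΓ ▸ integral_nonneg ht.1.le fun s hs =>
    one_div_nonneg.2 (hfpos s (Icc_subset_Ico_right ht.2 hs)).le
  have htail : ∀ z ∈ Ioo 0 a, _ := fun z hz => integral_mul_exp_neg_mul_eq hα hfc.continuousAt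
    hfa (fun t ht => (hfpos t (Ioo_subset_Ico_self ht)).ne') hf' hk hΓ0 hΓ' hz
  refine ⟨fun z hz => ⟨intervalIntegrable_exp_neg_mul hα hz.2.le
    (fun t ht => (hΓ' t (Ioo_subset_Ioo_left hz.1.le ht)).continuousAt.continuousWithinAt)
    (fun t ht => hΓ0 t (Ioo_subset_Ioo_left hz.1.le ht)), (htail z hz).1⟩, fun z hz => ?_⟩
  simp only [hg, tailRatio]
  rw [(htail z hz).2, Real.exp_neg]
  field_simp

end ExpWeight

noncomputable def cbrtDeriv (z : ℝ) : ℝ := (3 * z ^ ((2:ℝ)/3))⁻¹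

theorem cbrtDeriv_pos {z : ℝ} (hz : 0 < z) : 0 < cbrtDeriv z := by
  unfold cbrtDeriv; positivity

theorem mul_inv_cbrtDeriv (α z : ℝ) : α * (cbrtDeriv z)⁻¹ = 3 * α * z ^ ((2:ℝ)/3) := by
  rw [cbrtDeriv, inv_inv]; ring

theorem antitoneOn_cbrtDeriv : AntitoneOn cbrtDeriv (Ioi 0) := fun x (hx : 0 < x) y _ hxy =>
  inv_anti₀ (by positivity) (by gcongr)

theorem continuousAt_cbrtDeriv {z : ℝ} (hz : 0 < z) : ContinuousAt cbrtDeriv z :=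
  (continuousAt_const.mul (Real.continuousAt_rpow_const _ _ (Or.inl hz.ne'))).inv₀
    (by positivity : 3 * z ^ ((2:ℝ)/3) ≠ 0)

theorem hasDerivAt_rpow_one_third {t : ℝ} (ht : 0 < t) :
    HasDerivAt (fun z : ℝ => z ^ ((1:ℝ)/3)) (cbrtDeriv t) t := by
  convert Real.hasDerivAt_rpow_const (p := 1/3) (Or.inl ht.ne') using 1
  rw [cbrtDeriv, show (1:ℝ)/3 - 1 = -(2/3) by norm_num, Real.rpow_neg ht.le]
  ring

noncomputable def cubeRootProfile (α z : ℝ) : ℝ := 1 - z ^ ((1:ℝ)/3) + α * z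

theorem continuous_cubeRootProfile (α : ℝ) : Continuous (cubeRootProfile α) :=
  (continuous_const.sub (Real.continuous_rpow_const (by norm_num))).add
    (continuous_const.mul continuous_id)

theorem hasDerivAt_cubeRootProfile (α : ℝ) {t : ℝ} (ht : 0 < t) :
    HasDerivAt (cubeRootProfile α) (α - cbrtDeriv t) t := by
  refine (((hasDerivAt_const t 1).sub (hasDerivAt_rpow_one_third ht)).add
    ((hasDerivAt_id' t).const_mul α)).congr_deriv ?_
  ring

theorem three_mul_rpow_two_thirds_lt_one {α a : ℝ} (hα : α < 4/27) (ha : 0 < a)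
    (hfa : cubeRootProfile α a = 0) (hpos : ∀ z ∈ Ico 0 a, 0 < cubeRootProfile α z) :
    3 * α * a ^ ((2:ℝ)/3) < 1 := by
  have hthird : (1:ℝ)/3 = ((3:ℕ) : ℝ)⁻¹ := by norm_num
  have hcube : (27/8 : ℝ) ^ ((1:ℝ)/3) = 3/2 := by
    rw [show (27/8 : ℝ) = (3/2) ^ 3 by norm_num, hthird]
    exact Real.pow_rpow_inv_natCast (by norm_num) (by norm_num)
  have hneg : cubeRootProfile α (27/8) < 0 := by
    rw [cubeRootProfile, hcube]; linarith
  have ha_lt : a < 27/8 := by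
    by_contra! h
    rcases h.eq_or_lt with h | h
    · exact hneg.ne (h ▸ hfa)
    · exact (hpos _ ⟨by norm_num, h⟩).not_gt hneg
  set s := a ^ ((1:ℝ)/3) with hs_def
  have hs : s < 3/2 := hcube ▸ Real.rpow_lt_rpow ha.le ha_lt (by norm_num)
  have hs0 : 0 < s := Real.rpow_pos_of_pos ha _
  have ha_s : a = s ^ 3 := by
    rw [hs_def, hthird, Real.rpow_inv_natCast_pow ha.le (by norm_num)]
  have ha_s2 : a ^ ((2:ℝ)/3) = s ^ 2 := by
    rw [hs_def, ← Real.rpow_natCast, ← Real.rpow_mul ha.le]; norm_num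
  rw [cubeRootProfile, ← hs_def, ha_s] at hfa
  rw [ha_s2]
  nlinarith

/-- For `0 < α < 4/27`, the function
`g_α(z) = (α/f_α(z))·e^{αΓ_α(z)}·∫_z^{a_α} e^{−αΓ_α(z')}dz'` satisfies
`g_α(z) ≥ 3αz^{2/3}` on `(0, a_α)`, is monotonically increasing there, and tends to
`3α·a_α^{2/3} < 1` as `z → a_α`. -/
theorem stmt_17 (α a : ℝ) (hα : 0 < α) (hα2 : α < 4/27)
    (f Γ g : ℝ → ℝ)
    (hf : f = fun z => 1 - z ^ ((1:ℝ)/3) + α * z)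
    (ha1 : 1 < a) (ha : f a = 0) (hamin : ∀ z ∈ Set.Ioo (0:ℝ) a, f z ≠ 0)
    (hΓ : Γ = fun z => ∫ t in (0:ℝ)..z, 1 / f t)
    (hg : g = fun z =>
      (α / f z) * Real.exp (α * Γ z) * ∫ t in z..a, Real.exp (-(α * Γ t))) :
    (∀ z ∈ Set.Ioo (0:ℝ) a, 3 * α * z ^ ((2:ℝ)/3) ≤ g z) ∧
    MonotoneOn g (Set.Ioo 0 a) ∧
    Filter.Tendsto g (nhdsWithin a (Set.Iio a)) (nhds (3 * α * a ^ ((2:ℝ)/3))) ∧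
    3 * α * a ^ ((2:ℝ)/3) < 1 := by
  replace hf : f = cubeRootProfile α := hf
  subst hf
  have ha0 : 0 < a := one_pos.trans ha1
  have hfpos : ∀ t ∈ Ico 0 a, 0 < cubeRootProfile α t := pos_of_mem_Ico_of_ne_zero
    (continuous_cubeRootProfile α).continuousOn (by simp [cubeRootProfile]) hamin
  obtain ⟨hi, hgR⟩ := integrable_and_eqOn_mul_tailRatio hα.le (continuous_cubeRootProfile α)
    hfpos ha (fun t ht => hasDerivAt_cubeRootProfile α ht.1)
    (fun t ht => (cbrtDeriv_pos ht.1).le) hΓ hg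
  have hk : AntitoneOn cbrtDeriv (Ioc 0 a) := antitoneOn_cbrtDeriv.mono Ioc_subset_Ioi_self
  have hka : 0 < cbrtDeriv a := cbrtDeriv_pos ha0
  have hw : ∀ t ∈ Ioc 0 a, 0 < Real.exp (-(α * Γ t)) := fun t _ => Real.exp_pos _
  refine ⟨fun z hz => ?_, fun x hx y hy hxy => ?_, ?_,
    three_mul_rpow_two_thirds_lt_one hα2 ha0 ha hfpos⟩
  · rw [hgR hz, ← mul_inv_cbrtDeriv]
    exact mul_le_mul_of_nonneg_left (inv_le_tailRatio hk hka hw hz (hi z hz).1 (hi z hz).2) hα.le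
  · rw [hgR hx, hgR hy]
    exact mul_le_mul_of_nonneg_left (monotoneOn_tailRatio hk hka hw hi hx hy hxy) hα.le
  · rw [← mul_inv_cbrtDeriv]
    refine ((tendsto_tailRatio ha0 hk hka (continuousAt_cbrtDeriv ha0).continuousWithinAt hw
      hi).const_mul α).congr' ?_
    exact eventuallyEq_of_mem (Ioo_mem_nhdsLT ha0) fun z hz => (hgR hz).symm
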